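/- Let κ > 0 and let z ∈ ℂ with Im z > 0. Then the Stieltjes transform of the semicircle measure μ_κ of radius κ, i.e. the probability measure on ℝ with density t ↦ (2/(πκ²))·√(max(κ² − t², 0)), satisfies ∫_ℝ (t − z)^{−1} dμ_κ(t) = (2/κ²)·(−z + √(z² − κ²)), where √(z² − κ²) denotes the value at z of the unique holomorphic square root of w ↦ w² − κ² on ℂ∖[−κ, κ] that is asymptotic to w as |w| → ∞. In particular μ_κ is a probability measure supported on [−κ, κ]. -/

import Mathlib

/-!
On `[-κ, κ]` the semicircle density is `2 / (π κ²) · √(κ² - t²)`, and it vanishes outside,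
so everything reduces to integrals over `[-κ, κ]`; the total mass is the area of a half-disc.

For the Stieltjes transform put `R = -i √(z² - κ²)`, so that `R² = κ² - z²` and
`Re R = Im √(z² - κ²) > 0`. With `N(t) = κ² - z t + R √(κ² - t²)`, the function
`√(κ² - t²) - z arcsin (t / κ) - R log (-i N(t) / (t - z))` is a primitive of
`√(κ² - t²) / (t - z)`, because `N' (t - z) - N = -(R / √(κ² - t²)) N`. The logarithm stays
on its principal branch since `Im (N / (t - z)) > 0` inside the interval, and `N / (t - z) = ±κ`
at the endpoints, so the primitive increases by `π (-z + i R)` across `[-κ, κ]`.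
-/

open MeasureTheory
open scoped ENNReal

noncomputable section

/-- The semicircle measure of radius `κ`:
density `t ↦ (2/(πκ²))·√(max (κ² − t²) 0)` with respect to Lebesgue measure. -/
def semicircle (κ : ℝ) : Measure ℝ :=
  MeasureTheory.volume.withDensity fun t =>
    ENNReal.ofReal ((2 / (Real.pi * κ ^ 2)) * Real.sqrt (max (κ ^ 2 - t ^ 2) 0))

/-- The holomorphic square root of `z² − κ²` on `ℂ ∖ [−κ, κ]` asymptotic to `z` at
infinity, realized as `(z−κ)^{1/2}·(z+κ)^{1/2}` with principal branches. -/
def sqrtBr (κ : ℝ) (z : ℂ) : ℂ :=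
  (z - (κ : ℂ)) ^ ((1 : ℂ) / 2) * (z + (κ : ℂ)) ^ ((1 : ℂ) / 2)

open Real Complex Set

lemma Complex.cpow_half_re_pos_of_im_ne_zero {x : ℂ} (hx : x.im ≠ 0) :
    0 < (x ^ ((1 : ℂ) / 2)).re := by
  rw [one_div, cpow_inv_two_re]
  have := abs_re_lt_norm.2 hx
  exact Real.sqrt_pos.2 (by linarith [neg_abs_le x.re])

lemma Complex.cpow_half_im_pos_of_im_pos {x : ℂ} (hx : 0 < x.im) :
    0 < (x ^ ((1 : ℂ) / 2)).im := by
  rw [one_div, cpow_inv_two_im_eq_sqrt hx.le]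
  have := abs_re_lt_norm.2 hx.ne'
  exact Real.sqrt_pos.2 (by linarith [le_abs_self x.re])

lemma Complex.ofReal_sub_ne_zero_of_im_ne_zero {z : ℂ} (hz : z.im ≠ 0) (t : ℝ) :
    (t : ℂ) - z ≠ 0 := by
  intro h
  simpa [hz] using congrArg im h

lemma sqrtBr_sq (κ : ℝ) (z : ℂ) : sqrtBr κ z ^ 2 = z ^ 2 - κ ^ 2 := by
  have half_sq (x : ℂ) : (x ^ ((1 : ℂ) / 2)) ^ 2 = x := by simp
  rw [sqrtBr, mul_pow, half_sq, half_sq]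
  ring

lemma sqrtBr_im_pos (κ : ℝ) {z : ℂ} (hz : 0 < z.im) : 0 < (sqrtBr κ z).im := by
  have hsub : 0 < (z - κ).im := by simpa using hz
  have hadd : 0 < (z + κ).im := by simpa using hz
  rw [sqrtBr, mul_im]
  have := mul_pos (cpow_half_re_pos_of_im_ne_zero hsub.ne') (cpow_half_im_pos_of_im_pos hadd)
  have := mul_pos (cpow_half_im_pos_of_im_pos hsub) (cpow_half_re_pos_of_im_ne_zero hadd.ne')
  linarith

lemma Real.sqrt_max_zero (x : ℝ) : √(max x 0) = √x := by
  rcases le_total x 0 with h | h <;> simp [h, Real.sqrt_eq_zero_of_nonpos]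

section SqrtSqSubSq

variable {κ t : ℝ}

lemma sq_sub_sq_pos_of_mem_Ioo (ht : t ∈ Ioo (-κ) κ) : 0 < κ ^ 2 - t ^ 2 := by
  nlinarith [ht.1, ht.2]

lemma hasDerivAt_sqrt_sq_sub_sq (ht : t ∈ Ioo (-κ) κ) :
    HasDerivAt (fun u => √(κ ^ 2 - u ^ 2)) (-t / √(κ ^ 2 - t ^ 2)) t := by
  refine (((hasDerivAt_pow 2 t).const_sub (κ ^ 2)).sqrt
    (sq_sub_sq_pos_of_mem_Ioo ht).ne').congr_deriv ?_
  field_simp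
  ring

lemma hasDerivAt_arcsin_div (ht : t ∈ Ioo (-κ) κ) :
    HasDerivAt (fun u => arcsin (u / κ)) (√(κ ^ 2 - t ^ 2))⁻¹ t := by
  have hκ : 0 < κ := by linarith [ht.1, ht.2]
  have hlt : |t / κ| < 1 := by
    rw [abs_div, abs_of_pos hκ, div_lt_one hκ, abs_lt]; exact ht
  have hne1 : t / κ ≠ -1 := by linarith [neg_abs_le (t / κ)]
  have hne2 : t / κ ≠ 1 := by linarith [le_abs_self (t / κ)]
  refine ((Real.hasDerivAt_arcsin hne1 hne2).comp t
    ((hasDerivAt_id t).div_const κ)).congr_deriv ?_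
  have : 1 - (t / κ) ^ 2 = (κ ^ 2 - t ^ 2) / κ ^ 2 := by field_simp
  rw [this, Real.sqrt_div' _ (by positivity), Real.sqrt_sq hκ.le]
  simp
  field_simp

lemma integral_sqrt_sq_sub_sq (hκ : 0 ≤ κ) :
    ∫ t in -κ..κ, √(κ ^ 2 - t ^ 2) = π * κ ^ 2 / 2 := by
  rcases hκ.eq_or_lt with rfl | hκ
  · simp
  have hscale (x : ℝ) : √(κ ^ 2 - (κ * x) ^ 2) = κ * √(1 - x ^ 2) := by
    rw [show κ ^ 2 - (κ * x) ^ 2 = κ ^ 2 * (1 - x ^ 2) by ring, Real.sqrt_mul (sq_nonneg κ),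
      Real.sqrt_sq hκ.le]
  have hsubst := intervalIntegral.integral_comp_mul_left (fun t => √(κ ^ 2 - t ^ 2)) hκ.ne'
    (a := -1) (b := 1)
  simp only [hscale, intervalIntegral.integral_const_mul, integral_sqrt_one_sub_sq, mul_neg,
    mul_one, smul_eq_mul] at hsubst
  field_simp at hsubst ⊢
  linarith

end SqrtSqSubSq

def stieltjesLogArg (κ : ℝ) (z R : ℂ) (t : ℝ) : ℂ :=
  (κ ^ 2 - z * t + R * √(κ ^ 2 - t ^ 2)) / (t - z)

/-- The factor `-I` keeps the argument of the logarithm inside the slit plane also at the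
endpoints, where `stieltjesLogArg` takes the values `±κ`. -/
def stieltjesPrimitive (κ : ℝ) (z R : ℂ) (t : ℝ) : ℂ :=
  √(κ ^ 2 - t ^ 2) - z * arcsin (t / κ) - R * Complex.log (-I * stieltjesLogArg κ z R t)

section Primitive

variable {κ : ℝ} {z R : ℂ}

lemma stieltjesLogArg_of_sq_eq (hz : z.im ≠ 0) {t : ℝ} (ht : t ^ 2 = κ ^ 2) :
    stieltjesLogArg κ z R t = t := by
  rw [stieltjesLogArg, div_eq_iff (ofReal_sub_ne_zero_of_im_ne_zero hz t), ht, sub_self,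
    Real.sqrt_zero]
  push_cast
  rw [← ofReal_pow, ← ht]
  push_cast
  ring

lemma stieltjesLogArg_im_pos (hz : 0 < z.im) (hR : R ^ 2 = κ ^ 2 - z ^ 2) (hRre : 0 < R.re)
    {t : ℝ} (ht : t ∈ Ioo (-κ) κ) : 0 < (stieltjesLogArg κ z R t).im := by
  set s := √(κ ^ 2 - t ^ 2)
  have hs : 0 < s := Real.sqrt_pos.2 (sq_sub_sq_pos_of_mem_Ioo ht)
  have hs2 : s ^ 2 = κ ^ 2 - t ^ 2 := Real.sq_sqrt (sq_sub_sq_pos_of_mem_Ioo ht).le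
  have hRre2 : R.re ^ 2 - R.im ^ 2 = κ ^ 2 - z.re ^ 2 + z.im ^ 2 := by
    have := congrArg re hR
    simp only [sq, mul_re, sub_re, ofReal_re, ofReal_im] at this
    linarith
  have hRim2 : R.re * R.im = -(z.re * z.im) := by
    have := congrArg im hR
    simp only [sq, mul_im, sub_im, ofReal_re, ofReal_im] at this
    linarith
  set E := (s + R.re) * z.im + R.im * (t - z.re)
  -- multiplying by `Re R` turns `E` into `Im z` times a sum of squares
  have hE : 0 < E := by
    have hER : 2 * (E * R.re) =
        z.im * (2 * s * R.re + R.re ^ 2 + R.im ^ 2 + z.im ^ 2 + (z.re - t) ^ 2 + s ^ 2) := by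
      linear_combination (2 * (t - z.re)) * hRim2 + z.im * hRre2 - z.im * hs2
    have : 0 < 2 * (E * R.re) := by rw [hER]; positivity
    nlinarith
  rw [stieltjesLogArg, div_im, div_sub_div_same]
  refine div_pos ?_ (normSq_pos.2 (ofReal_sub_ne_zero_of_im_ne_zero hz.ne' t))
  have : (κ ^ 2 - z * t + R * s : ℂ).im * ((t : ℂ) - z).re
      - (κ ^ 2 - z * t + R * s : ℂ).re * ((t : ℂ) - z).im = s * E := by
    simp only [sub_im, add_im, mul_im, sub_re, add_re, mul_re, ofReal_re, ofReal_im,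
      ← ofReal_pow, E]
    linear_combination (-z.im) * hs2
  rw [this]
  positivity

lemma hasDerivAt_log_stieltjesLogArg (hz : 0 < z.im) (hR : R ^ 2 = κ ^ 2 - z ^ 2)
    (hRre : 0 < R.re) {t : ℝ} (ht : t ∈ Ioo (-κ) κ) :
    HasDerivAt (fun u : ℝ => Complex.log (-I * stieltjesLogArg κ z R u))
      (-R / (√(κ ^ 2 - t ^ 2) * (t - z))) t := by
  set s := √(κ ^ 2 - t ^ 2)
  have hs : (s : ℂ) ≠ 0 := ofReal_ne_zero.2 (Real.sqrt_pos.2 (sq_sub_sq_pos_of_mem_Ioo ht)).ne'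
  have hs2 : (s : ℂ) ^ 2 = κ ^ 2 - t ^ 2 := by
    exact_mod_cast Real.sq_sqrt (sq_sub_sq_pos_of_mem_Ioo ht).le
  have hD := ofReal_sub_ne_zero_of_im_ne_zero hz.ne' t
  have him := stieltjesLogArg_im_pos hz hR hRre ht
  have hN : (κ ^ 2 - z * t + R * s : ℂ) ≠ 0 := by
    intro h
    simp [stieltjesLogArg, s, h] at him
  have hNd : HasDerivAt (fun u : ℝ => (κ ^ 2 - z * u + R * √(κ ^ 2 - u ^ 2) : ℂ))
      (-z + R * (-t / s : ℝ)) t := by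
    have hid := (hasDerivAt_id t).ofReal_comp
    refine (((hid.const_mul z).const_sub ((κ : ℂ) ^ 2)).add
      ((hasDerivAt_sqrt_sq_sub_sq ht).ofReal_comp.const_mul R)).congr_deriv ?_
    simp [s]
  have hDd : HasDerivAt (fun u : ℝ => (u : ℂ) - z) 1 t := by
    refine (((hasDerivAt_id t).ofReal_comp).sub_const z).congr_deriv ?_
    simp
  have hslit : -I * stieltjesLogArg κ z R t ∈ slitPlane := by
    rw [mem_slitPlane_iff]; left; simpa using him
  refine (((hNd.div hDd hD).const_mul (-I)).clog_real hslit).congr_deriv ?_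
  simp only [stieltjesLogArg, s, Pi.div_apply] at *
  push_cast
  field_simp
  linear_combination s * hR - R * hs2

lemma hasDerivAt_stieltjesPrimitive (hz : 0 < z.im) (hR : R ^ 2 = κ ^ 2 - z ^ 2)
    (hRre : 0 < R.re) {t : ℝ} (ht : t ∈ Ioo (-κ) κ) :
    HasDerivAt (stieltjesPrimitive κ z R) (√(κ ^ 2 - t ^ 2) * (t - z)⁻¹) t := by
  have hs : (√(κ ^ 2 - t ^ 2) : ℂ) ≠ 0 :=
    ofReal_ne_zero.2 (Real.sqrt_pos.2 (sq_sub_sq_pos_of_mem_Ioo ht)).ne'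
  have hs2 : (√(κ ^ 2 - t ^ 2) : ℂ) ^ 2 = κ ^ 2 - t ^ 2 := by
    exact_mod_cast Real.sq_sqrt (sq_sub_sq_pos_of_mem_Ioo ht).le
  have hD := ofReal_sub_ne_zero_of_im_ne_zero hz.ne' t
  refine (((hasDerivAt_sqrt_sq_sub_sq ht).ofReal_comp.sub
    ((hasDerivAt_arcsin_div ht).ofReal_comp.const_mul z)).sub
    ((hasDerivAt_log_stieltjesLogArg hz hR hRre ht).const_mul R)).congr_deriv ?_
  push_cast
  field_simp
  linear_combination hR - hs2

lemma continuousOn_stieltjesPrimitive (hκ : 0 < κ) (hz : 0 < z.im)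
    (hR : R ^ 2 = κ ^ 2 - z ^ 2) (hRre : 0 < R.re) :
    ContinuousOn (stieltjesPrimitive κ z R) (Icc (-κ) κ) := by
  have hs : Continuous fun t : ℝ => √(κ ^ 2 - t ^ 2) := by fun_prop
  have hlogArg : Continuous (stieltjesLogArg κ z R) :=
    (by fun_prop : Continuous fun t : ℝ => (κ ^ 2 - z * t + R * √(κ ^ 2 - t ^ 2) : ℂ)).div
      (by fun_prop) (ofReal_sub_ne_zero_of_im_ne_zero hz.ne')
  have hslit : ∀ t ∈ Icc (-κ) κ, -I * stieltjesLogArg κ z R t ∈ slitPlane := by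
    intro t ht
    rcases eq_endpoints_or_mem_Ioo_of_mem_Icc ht with rfl | rfl | ht
    · rw [stieltjesLogArg_of_sq_eq hz.ne' (neg_sq κ)]
      simp [mem_slitPlane_iff, hκ.ne']
    · rw [stieltjesLogArg_of_sq_eq hz.ne' rfl]
      simp [mem_slitPlane_iff, hκ.ne']
    · rw [mem_slitPlane_iff]; left
      simpa using stieltjesLogArg_im_pos hz hR hRre ht
  unfold stieltjesPrimitive
  refine ((continuous_ofReal.comp hs).continuousOn.sub ?_).sub
    (continuousOn_const.mul ((continuous_const.mul hlogArg).continuousOn.clog hslit))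
  exact (continuous_const.mul (continuous_ofReal.comp
    (Real.continuous_arcsin.comp (continuous_id.div_const κ)))).continuousOn

lemma integral_sqrt_sq_sub_sq_mul_inv_sub (hκ : 0 < κ) (hz : 0 < z.im)
    (hR : R ^ 2 = κ ^ 2 - z ^ 2) (hRre : 0 < R.re) :
    ∫ t in -κ..κ, (√(κ ^ 2 - t ^ 2) : ℂ) * (t - z)⁻¹ = π * (-z + I * R) := by
  have hint :
      IntervalIntegrable (fun t : ℝ => (√(κ ^ 2 - t ^ 2) : ℂ) * (t - z)⁻¹) volume (-κ) κ :=
    ((by fun_prop : Continuous fun t : ℝ => (√(κ ^ 2 - t ^ 2) : ℂ)).mul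
      ((by fun_prop : Continuous fun t : ℝ => (t : ℂ) - z).inv₀
        (ofReal_sub_ne_zero_of_im_ne_zero hz.ne'))).intervalIntegrable _ _
  rw [intervalIntegral.integral_eq_sub_of_hasDeriv_right_of_le (by linarith)
    (continuousOn_stieltjesPrimitive hκ hz hR hRre)
    (fun t ht => (hasDerivAt_stieltjesPrimitive hz hR hRre ht).hasDerivWithinAt) hint]
  have hlogκ : Complex.log (-I * κ) = Real.log κ - π / 2 * I := by
    rw [mul_comm, log_ofReal_mul hκ (neg_ne_zero.2 I_ne_zero), log_neg_I]; ring
  have hlognegκ : Complex.log (-I * (-κ : ℝ)) = Real.log κ + π / 2 * I := by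
    rw [ofReal_neg, neg_mul_neg, mul_comm, log_ofReal_mul hκ I_ne_zero, log_I]
  simp only [stieltjesPrimitive, stieltjesLogArg_of_sq_eq hz.ne' (neg_sq κ),
    stieltjesLogArg_of_sq_eq hz.ne' (rfl : κ ^ 2 = κ ^ 2), hlogκ, hlognegκ,
    div_self hκ.ne', neg_div_self hκ.ne', Real.arcsin_one, Real.arcsin_neg_one]
  simp only [neg_sq, sub_self, Real.sqrt_zero]
  push_cast
  ring

end Primitive

def semicircleDensity (κ t : ℝ) : ℝ :=
  2 / (π * κ ^ 2) * √(κ ^ 2 - t ^ 2)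

section Measure

variable {κ : ℝ}

lemma semicircle_eq_withDensity (κ : ℝ) :
    semicircle κ = volume.withDensity fun t => ENNReal.ofReal (semicircleDensity κ t) := by
  simp only [semicircle, semicircleDensity, Real.sqrt_max_zero]

lemma semicircleDensity_nonneg (κ t : ℝ) : 0 ≤ semicircleDensity κ t := by
  unfold semicircleDensity; positivity

lemma measurable_ofReal_semicircleDensity (κ : ℝ) :
    Measurable fun t => ENNReal.ofReal (semicircleDensity κ t) := by
  unfold semicircleDensity; fun_prop

lemma semicircleDensity_eq_zero (hκ : 0 ≤ κ) {t : ℝ} (ht : t ∉ Icc (-κ) κ) :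
    semicircleDensity κ t = 0 := by
  rw [semicircleDensity, Real.sqrt_eq_zero_of_nonpos, mul_zero]
  rw [mem_Icc, not_and_or, not_le, not_le] at ht
  rcases ht with ht | ht <;> nlinarith

lemma integral_semicircle {E : Type*} [NormedAddCommGroup E] [NormedSpace ℝ E] (hκ : 0 ≤ κ)
    (f : ℝ → E) :
    ∫ t, f t ∂semicircle κ = ∫ t in -κ..κ, semicircleDensity κ t • f t := by
  rw [semicircle_eq_withDensity, integral_withDensity_eq_integral_toReal_smul
    (measurable_ofReal_semicircleDensity κ) (ae_of_all _ fun _ => ENNReal.ofReal_lt_top),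
    intervalIntegral.integral_of_le (by linarith), ← integral_Icc_eq_integral_Ioc]
  simp only [ENNReal.toReal_ofReal (semicircleDensity_nonneg _ _)]
  exact (setIntegral_eq_integral_of_forall_compl_eq_zero fun t ht => by
    rw [semicircleDensity_eq_zero hκ ht, zero_smul]).symm

lemma intervalIntegral_semicircleDensity (hκ : 0 < κ) :
    ∫ t in -κ..κ, semicircleDensity κ t = 1 := by
  simp only [semicircleDensity, intervalIntegral.integral_const_mul,
    integral_sqrt_sq_sub_sq hκ.le]
  field_simp

lemma isProbabilityMeasure_semicircle (hκ : 0 < κ) : IsProbabilityMeasure (semicircle κ) := by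
  have h := integral_semicircle hκ.le fun _ => (1 : ℝ)
  simp only [integral_const, smul_eq_mul, mul_one, intervalIntegral_semicircleDensity hκ,
    measureReal_def, ENNReal.toReal_eq_one_iff] at h
  exact ⟨h⟩

lemma semicircle_compl_Icc (hκ : 0 ≤ κ) : semicircle κ (Icc (-κ) κ)ᶜ = 0 := by
  rw [semicircle_eq_withDensity, withDensity_apply_eq_zero (measurable_ofReal_semicircleDensity κ)]
  convert measure_empty (μ := volume)
  refine eq_empty_of_forall_notMem fun t ⟨hne, ht⟩ => hne ?_
  rw [semicircleDensity_eq_zero hκ ht, ENNReal.ofReal_zero]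

lemma integral_semicircle_inv_sub (hκ : 0 < κ) {z : ℂ} (hz : 0 < z.im) :
    ∫ t, ((t : ℂ) - z)⁻¹ ∂semicircle κ = 2 / (κ : ℂ) ^ 2 * (-z + sqrtBr κ z) := by
  have hR : (-I * sqrtBr κ z) ^ 2 = κ ^ 2 - z ^ 2 := by
    rw [mul_pow, sqrtBr_sq, neg_sq, I_sq]; ring
  have hRre : 0 < (-I * sqrtBr κ z).re := by simpa using sqrtBr_im_pos κ hz
  have hIR : I * (-I * sqrtBr κ z) = sqrtBr κ z := by
    rw [← mul_assoc, mul_neg, I_mul_I, neg_neg, one_mul]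
  rw [integral_semicircle hκ.le]
  simp only [semicircleDensity, real_smul, ofReal_mul, mul_assoc,
    intervalIntegral.integral_const_mul, integral_sqrt_sq_sub_sq_mul_inv_sub hκ hz hR hRre, hIR]
  have : (π : ℂ) ≠ 0 := ofReal_ne_zero.2 Real.pi_ne_zero
  push_cast
  field_simp

end Measure

/-- the Stieltjes transform of the semicircle measure of radius `κ > 0`
is `(2/κ²)(−z + √(z²−κ²))` on the upper half-plane; moreover the semicircle measure is
a probability measure supported on `[−κ, κ]`. -/
theorem stmt18 (κ : ℝ) (hκ : 0 < κ) (z : ℂ) (hz : 0 < z.im) :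
    (∫ t, ((t : ℂ) - z)⁻¹ ∂(semicircle κ)) =
      (2 / (κ : ℂ) ^ 2) * (-z + sqrtBr κ z) ∧
    IsProbabilityMeasure (semicircle κ) ∧
    semicircle κ (Set.Icc (-κ) κ)ᶜ = 0 :=
  ⟨integral_semicircle_inv_sub hκ hz, isProbabilityMeasure_semicircle hκ,
    semicircle_compl_Icc hκ.le⟩

end
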